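/- arXiv:1310.6543 — 2 statements merged into one kernel-verified Lean document; each statement's English description precedes it below -/
import Mathlib

section
/- Every vertex-transitive graph admitting an edge-transitive but not arc-transitive group of automorphisms has even valence. -/
/-! Fix an arc `(a, b)` and orient every edge along the `G`-orbit `R` of `(a, b)`. Edge-transitivity
says every arc lies in `R` or in its reverse, and if some edge had both orientations in `R`, then
`(b, a) ∈ R` and `G` would be arc-transitive. So `R` is an orientation of the graph, and the
valence of `v` is its out-degree plus its in-degree in `R`. Both are constant by
vertex-transitivity, and counting the arcs of `R` by tails and by heads shows they are equal. -/

/-- `g` is an automorphism of the digraph with arc relation `A`. -/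
def IsDigraphAut {V : Type*} (A : V → V → Prop) (g : Equiv.Perm V) : Prop :=
  ∀ u v : V, A u v ↔ A (g u) (g v)

/-- `G` acts transitively on the vertex set. -/
def IsVertexTrans {V : Type*} (G : Subgroup (Equiv.Perm V)) : Prop :=
  ∀ u v : V, ∃ g ∈ G, g u = v

/-- `G` acts transitively on the arcs of the (di)graph with arc relation `A`. -/
def IsArcTrans {V : Type*} (A : V → V → Prop) (G : Subgroup (Equiv.Perm V)) : Prop :=
  ∀ u v x y : V, A u v → A x y → ∃ g ∈ G, g u = x ∧ g v = y

/-- `G` acts transitively on the edges (unordered pairs) of the graph with arc relation `A`. -/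
def IsEdgeTrans {V : Type*} (A : V → V → Prop) (G : Subgroup (Equiv.Perm V)) : Prop :=
  ∀ u v x y : V, A u v → A x y → ∃ g ∈ G, (g u = x ∧ g v = y) ∨ (g u = y ∧ g v = x)

/-- The digraph with arc relation `A` is connected (its underlying graph is connected). -/
def DConnected {V : Type*} (A : V → V → Prop) : Prop :=
  ∀ u v : V, Relation.ReflTransGen (fun a b => A a b ∨ A b a) u v

open Finset

section Degrees

variable {V : Type*} {G : Subgroup (Equiv.Perm V)} {R : V → V → Prop}

theorem ncard_setOf_le_of_isVertexTrans [Finite V] (hvt : IsVertexTrans G)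
    (hR : ∀ g ∈ G, ∀ u v, R u v → R (g u) (g v)) (v w : V) :
    {u | R v u}.ncard ≤ {u | R w u}.ncard := by
  obtain ⟨g, hg, rfl⟩ := hvt v w
  exact Set.ncard_le_ncard_of_injOn g (fun u hu => hR g hg v u hu) g.injective.injOn

theorem ncard_setOf_eq_of_isVertexTrans [Finite V] (hvt : IsVertexTrans G)
    (hR : ∀ g ∈ G, ∀ u v, R u v → R (g u) (g v)) (v w : V) :
    {u | R v u}.ncard = {u | R w u}.ncard :=
  (ncard_setOf_le_of_isVertexTrans hvt hR v w).antisymm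
    (ncard_setOf_le_of_isVertexTrans hvt hR w v)

theorem sum_ncard_setOf_eq_sum_ncard_setOf_flip [Fintype V] (R : V → V → Prop) :
    ∑ v, {u | R v u}.ncard = ∑ v, {u | R u v}.ncard := by
  classical
  simp only [Set.ncard_eq_toFinset_card', Set.toFinset_ofPred]
  exact sum_card_bipartiteAbove_eq_sum_card_bipartiteBelow R

theorem ncard_setOf_eq_ncard_setOf_flip [Finite V] (hvt : IsVertexTrans G)
    (hR : ∀ g ∈ G, ∀ u v, R u v → R (g u) (g v)) (v : V) :
    {u | R v u}.ncard = {u | R u v}.ncard := by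
  have := Fintype.ofFinite V
  have hout (w : V) : {u | R w u}.ncard = {u | R v u}.ncard :=
    ncard_setOf_eq_of_isVertexTrans hvt hR w v
  have hin (w : V) : {u | R u w}.ncard = {u | R u v}.ncard :=
    ncard_setOf_eq_of_isVertexTrans (R := flip R) hvt (fun g hg u w => hR g hg w u) w v
  have hsum := sum_ncard_setOf_eq_sum_ncard_setOf_flip R
  simp only [hout, hin, sum_const, card_univ, smul_eq_mul] at hsum
  exact Nat.eq_of_mul_eq_mul_left (Fintype.card_pos_iff.mpr ⟨v⟩) hsum

end Degrees

section ArcOrbit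

variable {V : Type*} (G : Subgroup (Equiv.Perm V))

def arcOrbit (a b u v : V) : Prop :=
  ∃ g ∈ G, g a = u ∧ g b = v

variable {G} {a b u v x y : V}

theorem arcOrbit.map {g : Equiv.Perm V} (hg : g ∈ G) (h : arcOrbit G a b u v) :
    arcOrbit G a b (g u) (g v) := by
  obtain ⟨k, hk, rfl, rfl⟩ := h
  exact ⟨g * k, mul_mem hg hk, rfl, rfl⟩

theorem arcOrbit.symm (h : arcOrbit G a b u v) : arcOrbit G u v a b := by
  obtain ⟨g, hg, rfl, rfl⟩ := h
  exact ⟨g⁻¹, inv_mem hg, by simp, by simp⟩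

theorem arcOrbit.trans (h₁ : arcOrbit G a b u v) (h₂ : arcOrbit G u v x y) :
    arcOrbit G a b x y := by
  obtain ⟨g, hg, rfl, rfl⟩ := h₁
  obtain ⟨k, hk, rfl, rfl⟩ := h₂
  exact ⟨k * g, mul_mem hk hg, rfl, rfl⟩

theorem arcOrbit.swap (h : arcOrbit G a b u v) : arcOrbit G b a v u := by
  obtain ⟨g, hg, rfl, rfl⟩ := h
  exact ⟨g, hg, rfl, rfl⟩

theorem arcOrbit_swap_of_arcOrbit_of_arcOrbit (h : arcOrbit G a b u v)
    (h' : arcOrbit G a b v u) : arcOrbit G a b b a :=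
  (h.swap.trans h'.symm).symm

variable {A : V → V → Prop}

theorem arcOrbit.adj (haut : ∀ g ∈ G, IsDigraphAut A g) (hab : A a b) (h : arcOrbit G a b u v) :
    A u v := by
  obtain ⟨g, hg, rfl, rfl⟩ := h
  exact (haut g hg a b).mp hab

theorem arcOrbit_or_arcOrbit_of_adj (het : IsEdgeTrans A G) (hab : A a b) (huv : A u v) :
    arcOrbit G a b u v ∨ arcOrbit G a b v u := by
  obtain ⟨g, hg, ⟨hga, hgb⟩ | ⟨hga, hgb⟩⟩ := het u v a b huv hab
  · exact Or.inl (arcOrbit.symm ⟨g, hg, hga, hgb⟩)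
  · exact Or.inr (arcOrbit.symm ⟨g, hg, hgb, hga⟩)

theorem isArcTrans_of_arcOrbit_swap (het : IsEdgeTrans A G) (hab : A a b)
    (hba : arcOrbit G a b b a) : IsArcTrans A G := by
  have hall : ∀ u v, A u v → arcOrbit G a b u v := fun u v huv =>
    (arcOrbit_or_arcOrbit_of_adj het hab huv).elim id fun h => hba.trans h.swap
  intro u v x y huv hxy
  exact (hall u v huv).symm.trans (hall x y hxy)

end ArcOrbit

theorem stmt0_general {V : Type*} [Finite V] (A : V → V → Prop)
    (hsym : ∀ u v : V, A u v → A v u)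
    (G : Subgroup (Equiv.Perm V))
    (haut : ∀ g ∈ G, IsDigraphAut A g)
    (hvt : IsVertexTrans G) (het : IsEdgeTrans A G) (hnat : ¬ IsArcTrans A G) :
    ∀ v : V, Even {u : V | A v u}.ncard := by
  intro v
  obtain ⟨a, b, hab⟩ : ∃ a b, A a b := by
    by_contra! h
    exact hnat fun u v _ _ huv _ => absurd huv (h u v)
  set R := arcOrbit G a b
  have hsplit : {u | A v u} = {u | R v u} ∪ {u | R u v} := by
    ext u
    exact ⟨arcOrbit_or_arcOrbit_of_adj het hab,
      Or.rec (arcOrbit.adj haut hab) fun h => hsym _ _ (h.adj haut hab)⟩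
  have hdisj : Disjoint {u | R v u} {u | R u v} := Set.disjoint_left.mpr fun _ h h' =>
    hnat (isArcTrans_of_arcOrbit_swap het hab (arcOrbit_swap_of_arcOrbit_of_arcOrbit h h'))
  rw [hsplit, Set.ncard_union_eq hdisj,
    ncard_setOf_eq_ncard_setOf_flip hvt (fun g hg _ _ h => h.map hg) v]
  exact ⟨_, rfl⟩

/-- Every vertex-transitive graph admitting an edge-transitive but not arc-transitive
group of automorphisms has even valence. -/
theorem stmt0 {V : Type*} [Finite V] (A : V → V → Prop)
    (hirr : ∀ v : V, ¬ A v v) (hsym : ∀ u v : V, A u v → A v u)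
    (G : Subgroup (Equiv.Perm V))
    (haut : ∀ g ∈ G, IsDigraphAut A g)
    (hvt : IsVertexTrans G) (het : IsEdgeTrans A G) (hnat : ¬ IsArcTrans A G) :
    ∀ v : V, Even {u : V | A v u}.ncard :=
  stmt0_general A hsym G haut hvt het hnat
end

section
/- For n ≥ 3, the wreath digraph W⃗_n, with vertex set Z_n × Z_2 and arcs ((i,a),(i+1,b)) for all i ∈ Z_n and a,b ∈ Z_2, has automorphism group isomorphic to the wreath product C_2 ≀ C_n, of order n·2^n. -/
/-!
Since there is an arc `(i, a) → (j, b)` exactly when `j = i + 1`, an automorphism `g` of `W⃗_n`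
maps fibres `{i} × Z_2` to fibres, and following arcs shows that on fibres it is a rotation
`i ↦ i + k`; on each fibre it is a bijection of `Z_2`, hence a translation by some `f i`.
Conversely, fibrewise flips `(C_2)^n` and rotations `C_n` are automorphisms, and conjugating a
flip by a rotation shifts its coordinates, which is exactly the semidirect product `C_2 ≀ C_n`.
-/

/-- The full automorphism group of the digraph with arc relation `A`,
as a subgroup of the permutation group of the vertex set. -/
def autSubgroup {V : Type*} (A : V → V → Prop) : Subgroup (Equiv.Perm V) where
  carrier := {g : Equiv.Perm V | ∀ u v : V, A u v ↔ A (g u) (g v)}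
  one_mem' := by intro u v; simp
  mul_mem' := by
    intro a b ha hb u v
    simpa using (hb u v).trans (ha (b u) (b v))
  inv_mem' := by
    intro a ha u v
    simpa using (ha (a⁻¹ u) (a⁻¹ v)).symm

/-- The arc relation of the wreath digraph `W⃗_n` on `ZMod n × ZMod 2`:
there is an arc from `(i,a)` to `(i+1,b)` for all `i, a, b`. -/
def wArc (n : ℕ) : (ZMod n × ZMod 2) → (ZMod n × ZMod 2) → Prop :=
  fun p q => q.1 = p.1 + 1

/-- The shift-by-`k` automorphism of the group `(C_2)^n = ZMod n → Multiplicative (ZMod 2)`. -/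
def shiftEquiv (n : ℕ) (k : ZMod n) :
    (ZMod n → Multiplicative (ZMod 2)) ≃* (ZMod n → Multiplicative (ZMod 2)) where
  toFun f i := f (i + k)
  invFun f i := f (i - k)
  left_inv f := funext fun i => by simp
  right_inv f := funext fun i => by simp
  map_mul' f g := rfl

/-- The action of `C_n` on `(C_2)^n` by cyclically permuting coordinates. -/
def shiftHom (n : ℕ) :
    Multiplicative (ZMod n) →* MulAut (ZMod n → Multiplicative (ZMod 2)) where
  toFun k := shiftEquiv n (Multiplicative.toAdd k)
  map_one' := by
    ext f i
    simp [shiftEquiv]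
  map_mul' a b := by
    ext f i
    simp [shiftEquiv, add_assoc]

/-- The wreath product `C_2 ≀ C_n = (C_2)^n ⋊ C_n`, with `C_n` cyclically
permuting the coordinates. -/
def WreathC2Cn (n : ℕ) : Type :=
  (ZMod n → Multiplicative (ZMod 2)) ⋊[shiftHom n] Multiplicative (ZMod n)

instance (n : ℕ) : Group (WreathC2Cn n) :=
  inferInstanceAs (Group ((ZMod n → Multiplicative (ZMod 2)) ⋊[shiftHom n] Multiplicative (ZMod n)))

lemma ZMod.eq_add_of_map_add_one {n : ℕ} {σ : ZMod n → ZMod n} (h : ∀ i, σ (i + 1) = σ i + 1)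
    (i : ZMod n) : σ i = i + σ 0 := by
  obtain ⟨m, rfl⟩ := ZMod.intCast_surjective i
  induction m using Int.induction_on with
  | zero => simp
  | succ k ih => push_cast at ih ⊢; rw [h, ih]; ring
  | pred k ih =>
    have := h ((-k - 1 : ℤ) : ZMod n)
    push_cast at ih this ⊢
    rw [sub_add_cancel, ih] at this
    linear_combination -this

lemma ZMod.two_apply_eq_add_apply_zero {φ : ZMod 2 → ZMod 2} (hφ : Function.Injective φ)
    (a : ZMod 2) : φ a = a + φ 0 := by
  revert φ a
  decide

namespace WreathDigraph

open Multiplicative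

variable {n : ℕ}

def flipHom : (ZMod n → Multiplicative (ZMod 2)) →* Equiv.Perm (ZMod n × ZMod 2) where
  toFun l := Equiv.prodShear (Equiv.refl _) fun i => Equiv.addRight (toAdd (l i))
  map_one' := by ext <;> simp
  map_mul' l₁ l₂ := by ext <;> simp [add_right_comm]

def rotateHom : Multiplicative (ZMod n) →* Equiv.Perm (ZMod n × ZMod 2) where
  toFun r := Equiv.prodCongr (Equiv.subRight (toAdd r)) (Equiv.refl _)
  map_one' := by ext <;> simp
  map_mul' r₁ r₂ := by ext <;> simp [sub_sub, add_comm]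

@[simp]
lemma flipHom_apply (l : ZMod n → Multiplicative (ZMod 2)) (p : ZMod n × ZMod 2) :
    flipHom l p = (p.1, p.2 + toAdd (l p.1)) := rfl

@[simp]
lemma rotateHom_apply (r : Multiplicative (ZMod n)) (p : ZMod n × ZMod 2) :
    rotateHom r p = (p.1 - toAdd r, p.2) := rfl

@[simp]
lemma rotateHom_symm_apply (r : Multiplicative (ZMod n)) (p : ZMod n × ZMod 2) :
    (rotateHom r).symm p = (p.1 + toAdd r, p.2) := rfl

lemma flipHom_shiftHom (r : Multiplicative (ZMod n)) :
    flipHom.comp (shiftHom n r).toMonoidHom =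
      (MulAut.conj (rotateHom r)).toMonoidHom.comp flipHom := by
  ext l p <;> simp [shiftHom, shiftEquiv]

def toPerm : WreathC2Cn n →* Equiv.Perm (ZMod n × ZMod 2) :=
  SemidirectProduct.lift flipHom rotateHom flipHom_shiftHom

lemma toPerm_apply (x : WreathC2Cn n) (p : ZMod n × ZMod 2) :
    toPerm x p = (p.1 - toAdd x.right, p.2 + toAdd (x.left (p.1 - toAdd x.right))) := rfl

lemma toPerm_mk (l : ZMod n → Multiplicative (ZMod 2)) (r : Multiplicative (ZMod n))
    (p : ZMod n × ZMod 2) :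
    toPerm (⟨l, r⟩ : WreathC2Cn n) p = (p.1 - toAdd r, p.2 + toAdd (l (p.1 - toAdd r))) := rfl

lemma toPerm_mem (x : WreathC2Cn n) : toPerm x ∈ autSubgroup (wArc n) := fun u v => by
  simp only [wArc, toPerm_apply, sub_add_eq_add_sub, sub_left_inj]

lemma toPerm_injective : Function.Injective (toPerm (n := n)) := by
  rw [injective_iff_map_eq_one]
  intro x hx
  have hr : toAdd x.right = 0 := by
    simpa [toPerm_apply] using congr_arg (fun g => (g (0, 0)).1) hx
  have hl : ∀ i, toAdd (x.left i) = 0 := fun i => by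
    simpa [toPerm_apply, hr] using congr_arg (fun g => (g (i, 0)).2) hx
  exact SemidirectProduct.ext (funext hl) hr

lemma fst_apply_of_mem {g : Equiv.Perm (ZMod n × ZMod 2)} (hg : g ∈ autSubgroup (wArc n))
    (i : ZMod n) (a : ZMod 2) : (g (i, a)).1 = i + (g (0, 0)).1 := by
  have hsucc : ∀ u : ZMod n × ZMod 2, (g (u.1 + 1, 0)).1 = (g u).1 + 1 :=
    fun u => (hg u _).mp rfl
  have hfiber : (g (i, a)).1 = (g (i, 0)).1 :=
    add_right_cancel ((hsucc (i, a)).symm.trans (hsucc (i, 0)))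
  rw [hfiber, ZMod.eq_add_of_map_add_one (σ := fun i => (g (i, 0)).1) (fun i => hsucc (i, 0))]

lemma apply_eq_of_mem {g : Equiv.Perm (ZMod n × ZMod 2)} (hg : g ∈ autSubgroup (wArc n))
    (i : ZMod n) (a : ZMod 2) : g (i, a) = (i + (g (0, 0)).1, a + (g (i, 0)).2) := by
  have hinj : Function.Injective fun b => (g (i, b)).2 := fun b c hbc => by
    simpa using g.injective
      (Prod.ext ((fst_apply_of_mem hg i b).trans (fst_apply_of_mem hg i c).symm) hbc)
  exact Prod.ext (fst_apply_of_mem hg i a) (ZMod.two_apply_eq_add_apply_zero hinj a)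

lemma exists_toPerm_eq {g : Equiv.Perm (ZMod n × ZMod 2)} (hg : g ∈ autSubgroup (wArc n)) :
    ∃ x, toPerm x = g := by
  set k := (g (0, 0)).1
  refine ⟨⟨fun j => ofAdd (g (j - k, 0)).2, ofAdd (-k)⟩, Equiv.ext fun ⟨i, a⟩ => ?_⟩
  rw [apply_eq_of_mem hg, toPerm_mk]
  simp [k]

noncomputable def autEquiv : WreathC2Cn n ≃* autSubgroup (wArc n) :=
  MulEquiv.ofBijective (toPerm.codRestrict _ toPerm_mem)
    ⟨fun _ _ h => toPerm_injective (congr_arg Subtype.val h),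
      fun g => (exists_toPerm_eq g.2).imp fun _ hx => Subtype.ext hx⟩

end WreathDigraph

lemma WreathC2Cn.card (n : ℕ) [NeZero n] : Nat.card (WreathC2Cn n) = n * 2 ^ n := by
  simp [WreathC2Cn, SemidirectProduct.card, Nat.card_eq_fintype_card, mul_comm]

/-- For `n ≥ 3`, the automorphism group of the wreath digraph `W⃗_n` is isomorphic to
the wreath product `C_2 ≀ C_n`, of order `n·2^n`. -/
theorem stmt5 (n : ℕ) (hn : 3 ≤ n) :
    Nonempty (↥(autSubgroup (wArc n)) ≃* WreathC2Cn n) ∧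
    Nat.card ↥(autSubgroup (wArc n)) = n * 2 ^ n := by
  have : NeZero n := ⟨by omega⟩
  exact ⟨⟨WreathDigraph.autEquiv.symm⟩,
    (Nat.card_congr WreathDigraph.autEquiv.toEquiv).symm.trans (WreathC2Cn.card n)⟩
end
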